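/- arXiv:2106.05694 — 4 statements merged into one kernel-verified Lean document; each statement's English description precedes it below -/
import Mathlib

section
/- A 2x2 positive definite matrix Σ satisfies Σ = σ²(I−B)⁻¹(I−B)⁻ᵀ for some σ² > 0 and B strictly lower triangular (i.e., B = [[0,0],[β,0]]) if and only if Σ₁₁² = Σ₁₁Σ₂₂ − Σ₁₂², in which case β = Σ₁₂/Σ₁₁ and σ² = Σ₁₁. -/
/-!
With `B = !![0, 0; β, 0]` the matrix `I - B` is unipotent with inverse `L = !![1, 0; β, 1]`, so
`σ² (I - B)⁻¹ (I - B)⁻ᵀ = σ² L Lᵀ = !![σ², σ²β; σ²β, σ²(β² + 1)]`. Matching entries forces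
`σ² = Σ₁₁` and `β = Σ₁₂ / Σ₁₁` (as `Σ₁₁ > 0`), and the `(2,2)` entry is then consistent exactly
when `Σ₁₁ Σ₂₂ - Σ₁₂² = Σ₁₁²`.
-/

open Matrix

namespace Matrix

section CommRing

variable {R : Type*} [CommRing R]

theorem inv_one_sub_lower_fin_two (b : R) : (1 - !![0, 0; b, 0])⁻¹ = !![1, 0; b, 1] := by
  apply inv_eq_right_inv
  simp [one_fin_two]

theorem smul_inv_one_sub_lower_mul_transpose_fin_two (s b : R) :
    s • ((1 - !![0, 0; b, 0])⁻¹ * ((1 - !![0, 0; b, 0])⁻¹)ᵀ) =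
      !![s, s * b; s * b, s * (b ^ 2 + 1)] := by
  rw [inv_one_sub_lower_fin_two]
  ext i j
  fin_cases i <;> fin_cases j <;> simp [vecMul, dotProduct, Fin.sum_univ_two]
  ring

end CommRing

theorem eq_scaled_cholesky_fin_two_iff {K : Type*} [Field K] {M : Matrix (Fin 2) (Fin 2) K}
    (hsymm : M 1 0 = M 0 1) (h00 : M 0 0 ≠ 0) (s b : K) :
    M = !![s, s * b; s * b, s * (b ^ 2 + 1)] ↔
      s = M 0 0 ∧ b = M 0 1 / M 0 0 ∧ M 0 0 ^ 2 = M 0 0 * M 1 1 - M 0 1 ^ 2 := by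
  rw [Matrix.ext_iff.symm]
  simp only [Fin.forall_fin_two, of_apply, cons_val', cons_val_zero, cons_val_one, empty_val',
    cons_val_fin_one, hsymm]
  constructor
  · rintro ⟨⟨rfl, h01⟩, -, h11⟩
    refine ⟨rfl, by rw [h01]; field_simp, ?_⟩
    rw [h01, h11]
    ring
  · rintro ⟨rfl, rfl, h⟩
    refine ⟨⟨rfl, by field_simp⟩, by field_simp, ?_⟩
    field_simp
    linear_combination -h

end Matrix

theorem stmt_0 (M : Matrix (Fin 2) (Fin 2) ℝ) (hM : M.PosDef) :
    ((∃ s : ℝ, 0 < s ∧ ∃ β : ℝ,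
        M = s • ((1 - !![(0:ℝ), 0; β, 0])⁻¹ * ((1 - !![(0:ℝ), 0; β, 0])⁻¹)ᵀ)) ↔
      (M 0 0) ^ 2 = M 0 0 * M 1 1 - (M 0 1) ^ 2) ∧
    (∀ s β : ℝ, 0 < s →
      M = s • ((1 - !![(0:ℝ), 0; β, 0])⁻¹ * ((1 - !![(0:ℝ), 0; β, 0])⁻¹)ᵀ) →
      β = M 0 1 / M 0 0 ∧ s = M 0 0) := by
  have h00 : 0 < M 0 0 := hM.diag_pos
  have hsymm : M 1 0 = M 0 1 := by simpa using hM.isHermitian.apply 0 1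
  simp only [smul_inv_one_sub_lower_mul_transpose_fin_two,
    eq_scaled_cholesky_fin_two_iff hsymm h00.ne']
  exact ⟨⟨fun ⟨_, _, _, _, _, h⟩ ↦ h, fun h ↦ ⟨_, h00, _, rfl, rfl, h⟩⟩,
    fun _ _ _ ⟨hs, hb, _⟩ ↦ ⟨hb, hs⟩⟩
end

section
/- Let Σ be a 2x2 positive definite matrix lying in the union M_r = M_{r1} ∪ M_{r2}, where M_{ra} = {Σ positive definite : Σ_{aa}² = det(Σ)}. Then Σ ∈ M_{r1} if and only if Σ₁₁ ≤ Σ₂₂. -/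
/-! Since `det Σ = Σ₁₁ Σ₂₂ - Σ₁₂² ≤ Σ₁₁ Σ₂₂` and the diagonal is positive, `Σₐₐ² = det Σ`
forces `Σₐₐ` to be the smaller diagonal entry; if both diagonal entries qualify, they are equal. -/

open Matrix

theorem Matrix.IsHermitian.det_fin_two_le_mul_diag {M : Matrix (Fin 2) (Fin 2) ℝ}
    (hM : M.IsHermitian) : M.det ≤ M 0 0 * M 1 1 := by
  have hsym : M 1 0 = M 0 1 := by simpa using hM.apply 0 1
  rw [det_fin_two, hsym]
  nlinarith [sq_nonneg (M 0 1)]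

theorem le_of_sq_eq_of_le_mul {a b d : ℝ} (ha : 0 < a) (hd : d ≤ a * b) (h : a ^ 2 = d) :
    a ≤ b := by
  nlinarith

theorem stmt_3 (M : Matrix (Fin 2) (Fin 2) ℝ) (hM : M.PosDef)
    (hMr : (M 0 0) ^ 2 = M.det ∨ (M 1 1) ^ 2 = M.det) :
    (M 0 0) ^ 2 = M.det ↔ M 0 0 ≤ M 1 1 := by
  have hdet := hM.isHermitian.det_fin_two_le_mul_diag
  refine ⟨le_of_sq_eq_of_le_mul hM.diag_pos hdet, fun hle => ?_⟩
  rcases hMr with h00 | h11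
  · exact h00
  · have hge : M 1 1 ≤ M 0 0 := le_of_sq_eq_of_le_mul hM.diag_pos (by linarith) h11
    rwa [le_antisymm hle hge]
end

section
/- The function T : M_r → ℝ defined by T(Σ) = (Σ₁₂/Σ₁₁)·𝟙{Σ₁₁ ≤ Σ₂₂} is well-defined and continuous at every Σ ∈ M_r with Σ₁₁ ≠ Σ₂₂, but discontinuous at no point of M_r; indeed T is continuous on all of M_r (because Σ ∈ M_r with Σ₁₁ = Σ₂₂ forces Σ₁₂ = 0). -/
/-!
For a symmetric `2 × 2` matrix with `Σ₁₁ = Σ₂₂`, the condition `Σ₁₁² = det Σ = Σ₁₁² - Σ₁₂²` forces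
`Σ₁₂ = 0`. So on `M_r` the quotient `Σ₁₂ / Σ₁₁` vanishes exactly where the indicator jumps, and the
two continuous branches glue.
-/

open Matrix

theorem Matrix.IsHermitian.det_fin_two_real {A : Matrix (Fin 2) (Fin 2) ℝ} (hA : A.IsHermitian) :
    A.det = A 0 0 * A 1 1 - A 0 1 ^ 2 := by
  have hsymm : A 1 0 = A 0 1 := by simpa using hA.apply 0 1
  rw [det_fin_two, hsymm, sq]

theorem Matrix.IsHermitian.offDiag_eq_zero_of_sq_eq_det {A : Matrix (Fin 2) (Fin 2) ℝ}
    (hA : A.IsHermitian) (hdiag : A 0 0 = A 1 1) (hsq : A 0 0 ^ 2 = A.det) : A 0 1 = 0 := by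
  rw [hA.det_fin_two_real, ← hdiag] at hsq
  exact pow_eq_zero_iff two_ne_zero |>.mp (by linarith)

theorem continuous_ite_div_of_offDiag_eq_zero {X : Type*} [TopologicalSpace X]
    {S : X → Matrix (Fin 2) (Fin 2) ℝ} (hS : Continuous S) (hpos : ∀ x, S x 0 0 ≠ 0)
    (hdiag : ∀ x, S x 0 0 = S x 1 1 → S x 0 1 = 0) :
    Continuous fun x => if S x 0 0 ≤ S x 1 1 then S x 0 1 / S x 0 0 else 0 := by
  have hentry (i j : Fin 2) : Continuous fun x => S x i j := hS.matrix_elem i j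
  refine Continuous.if_le ((hentry 0 1).div (hentry 0 0) hpos) continuous_const
    (hentry 0 0) (hentry 1 1) fun x hx => ?_
  rw [hdiag x hx, zero_div]

/-- The causal-effect map `T(Σ) = (Σ₁₂/Σ₁₁)·𝟙{Σ₁₁ ≤ Σ₂₂}` is continuous on all of
`M_r`, since on `M_r` equality `Σ₁₁ = Σ₂₂` forces `Σ₁₂ = 0`. -/
theorem stmt_16 :
    (∀ M : {A : Matrix (Fin 2) (Fin 2) ℝ //
        A.PosDef ∧ ((A 0 0) ^ 2 = A.det ∨ (A 1 1) ^ 2 = A.det)},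
      M.1 0 0 = M.1 1 1 → M.1 0 1 = 0) ∧
    Continuous (fun M : {A : Matrix (Fin 2) (Fin 2) ℝ //
        A.PosDef ∧ ((A 0 0) ^ 2 = A.det ∨ (A 1 1) ^ 2 = A.det)} =>
      if M.1 0 0 ≤ M.1 1 1 then M.1 0 1 / M.1 0 0 else 0) := by
  have hdiag : ∀ M : {A : Matrix (Fin 2) (Fin 2) ℝ //
      A.PosDef ∧ ((A 0 0) ^ 2 = A.det ∨ (A 1 1) ^ 2 = A.det)},
      M.1 0 0 = M.1 1 1 → M.1 0 1 = 0 := by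
    rintro ⟨A, hA, hsq⟩ (hdiag : A 0 0 = A 1 1)
    refine hA.isHermitian.offDiag_eq_zero_of_sq_eq_det hdiag ?_
    rcases hsq with hsq | hsq
    · exact hsq
    · rwa [hdiag]
  exact ⟨hdiag, continuous_ite_div_of_offDiag_eq_zero continuous_subtype_val
    (fun M => M.2.1.diag_pos.ne') hdiag⟩
end

section
/- Let S be 2x2 positive definite and k ≥ 1. Define ℓ†(ψ) := −k·log(π·((1+ψ²)S₁₁ − 2ψS₁₂ + S₂₂)) − k for ψ ≠ 0, and ℓ†(0) := −k·log(π·(S₁₁ − S₁₂²/S₂₂ + S₂₂)) − k. Then ℓ†(0) ≥ lim_{ψ→0} ℓ†(ψ) = −k·log(π·(S₁₁ + S₂₂)) − k, with strict inequality whenever S₁₂ ≠ 0. -/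
/-!
At `ψ = 0` the reverse coefficient `β₁₂` is profiled out, which lowers the residual term
`S₁₁ + S₂₂` of the likelihood by `S₁₂² / S₂₂`, while keeping it positive because the Schur
complement `S₁₁ - S₁₂² / S₂₂` of a positive definite `S` is positive. The likelihood
`-k log (π v) - k` is strictly decreasing in the residual term `v`, and continuous in `ψ`.
-/

open Matrix Real Filter Set Topology

namespace Matrix.PosDef

variable {S : Matrix (Fin 2) (Fin 2) ℝ}

lemma sq_apply_zero_one_lt_mul (hS : S.PosDef) : S 0 1 ^ 2 < S 0 0 * S 1 1 := by
  have hdet := hS.det_pos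
  rw [det_fin_two, ← hS.isHermitian.apply 1 0, star_trivial] at hdet
  linarith

lemma schur_complement_pos (hS : S.PosDef) : 0 < S 0 0 - S 0 1 ^ 2 / S 1 1 := by
  rw [sub_pos, div_lt_iff₀ hS.diag_pos]
  exact hS.sq_apply_zero_one_lt_mul

end Matrix.PosDef

/-- `ℓ†(ψ)` is `profileLogLik k v` with `v` the residual term inside the logarithm. -/
noncomputable def profileLogLik (k : ℕ) (v : ℝ) : ℝ := -(k : ℝ) * log (π * v) - k

lemma profileLogLik_strictAntiOn {k : ℕ} (hk : 0 < k) :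
    StrictAntiOn (profileLogLik k) (Ioi 0) := by
  intro a ha b hb hab
  have hlog : log (π * a) < log (π * b) :=
    log_lt_log (mul_pos pi_pos ha) (mul_lt_mul_of_pos_left hab pi_pos)
  have hk' : (0 : ℝ) < k := by exact_mod_cast hk
  unfold profileLogLik
  nlinarith

lemma continuousAt_profileLogLik (k : ℕ) {v : ℝ} (hv : v ≠ 0) :
    ContinuousAt (profileLogLik k) v := by
  unfold profileLogLik
  have hlog : ContinuousAt (fun v => log (π * v)) v :=
    (continuousAt_const.mul continuousAt_id).log (mul_ne_zero pi_ne_zero hv)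
  exact (continuousAt_const.mul hlog).sub continuousAt_const

/-- The profile log-likelihood at `ψ = 0` dominates the limit of the nonzero-effect
profile log-likelihood as `ψ → 0`, strictly so when `S₁₂ ≠ 0`. -/
theorem stmt_19 (S : Matrix (Fin 2) (Fin 2) ℝ) (hS : S.PosDef) (k : ℕ) (hk : 1 ≤ k) :
    Filter.Tendsto
      (fun ψ : ℝ => -(k : ℝ) * Real.log (Real.pi *
        ((1 + ψ ^ 2) * S 0 0 - 2 * ψ * S 0 1 + S 1 1)) - k)
      (nhds 0) (nhds (-(k : ℝ) * Real.log (Real.pi * (S 0 0 + S 1 1)) - k)) ∧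
    (-(k : ℝ) * Real.log (Real.pi * (S 0 0 - (S 0 1) ^ 2 / S 1 1 + S 1 1)) - k
      ≥ -(k : ℝ) * Real.log (Real.pi * (S 0 0 + S 1 1)) - k) ∧
    (S 0 1 ≠ 0 →
      -(k : ℝ) * Real.log (Real.pi * (S 0 0 - (S 0 1) ^ 2 / S 1 1 + S 1 1)) - k
        > -(k : ℝ) * Real.log (Real.pi * (S 0 0 + S 1 1)) - k) := by
  have hS₁₁ : 0 < S 1 1 := hS.diag_pos
  have hv₀ : S 0 0 - S 0 1 ^ 2 / S 1 1 + S 1 1 ∈ Ioi 0 :=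
    add_pos hS.schur_complement_pos hS₁₁
  have hv : S 0 0 + S 1 1 ∈ Ioi 0 := add_pos hS.diag_pos hS₁₁
  have hℓ := profileLogLik_strictAntiOn hk
  refine ⟨?_, ?_, fun h01 => ?_⟩
  · have hquad : Tendsto (fun ψ : ℝ => (1 + ψ ^ 2) * S 0 0 - 2 * ψ * S 0 1 + S 1 1)
        (𝓝 0) (𝓝 (S 0 0 + S 1 1)) := by
      simpa using ((by fun_prop : Continuous fun ψ : ℝ =>
        (1 + ψ ^ 2) * S 0 0 - 2 * ψ * S 0 1 + S 1 1).tendsto 0)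
    exact (continuousAt_profileLogLik k (ne_of_gt hv)).tendsto.comp hquad
  · exact hℓ.antitoneOn hv₀ hv
      (by linarith [div_nonneg (sq_nonneg (S 0 1)) hS₁₁.le])
  · exact hℓ hv₀ hv (by linarith [div_pos (sq_pos_of_ne_zero h01) hS₁₁])
end
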